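/- The identity function and the exponential function on ℂ are algebraically independent over ℂ: if P ∈ ℂ[X, Y] is a polynomial in two variables such that P(z, exp z) = 0 for all z ∈ ℂ, then P = 0. -/
import Mathlib

open MvPolynomial Polynomial Complex

/-- Evaluating a univariate specialization of a multivariate polynomial. -/
lemma eval_aeval_aux (P : MvPolynomial (Fin 2) ℂ) (f : Fin 2 → Polynomial ℂ) (t : ℂ) :
    (MvPolynomial.aeval f P).eval t = MvPolynomial.eval (fun i => (f i).eval t) P := by
  induction P using MvPolynomial.induction_on with
  | C a => simp
  | add p q hp hq => simp [hp, hq]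
  | mul_X p i hp => simp [hp]

lemma key (P : MvPolynomial (Fin 2) ℂ)
    (h : ∀ z : ℂ, MvPolynomial.eval ![z, Complex.exp z] P = 0) :
    ∀ z w : ℂ, w ≠ 0 → MvPolynomial.eval ![z, w] P = 0 := by
  intro z w hw
  set z₀ := Complex.log w with hz₀
  have hez₀ : Complex.exp z₀ = w := Complex.exp_log hw
  set Q : Polynomial ℂ := MvPolynomial.aeval ![Polynomial.C z₀ + Polynomial.X, Polynomial.C w] P
    with hQ
  have hQeval : ∀ t : ℂ, Q.eval t = MvPolynomial.eval ![z₀ + t, w] P := by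
    intro t
    rw [hQ, eval_aeval_aux]
    have : (fun i => Polynomial.eval t (![Polynomial.C z₀ + Polynomial.X, Polynomial.C w] i))
        = ![z₀ + t, w] := by funext i; fin_cases i <;> simp
    rw [this]
  have hQ0 : Q = 0 := by
    apply Polynomial.eq_zero_of_infinite_isRoot
    apply Set.infinite_of_injective_forall_mem
      (f := fun n : ℕ => (n : ℂ) * (2 * Real.pi * Complex.I))
    · intro a b hab
      have h2 : (2 * (Real.pi : ℂ) * Complex.I) ≠ 0 := by
        simp [Real.pi_ne_zero, Complex.I_ne_zero]
      exact Nat.cast_injective (mul_right_cancel₀ h2 hab)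
    · intro n
      show Q.IsRoot _
      unfold Polynomial.IsRoot
      rw [hQeval]
      have : z₀ + (n : ℂ) * (2 * Real.pi * Complex.I)
          = z₀ + (n : ℂ) * (2 * Real.pi * Complex.I) := rfl
      have hexp : Complex.exp (z₀ + (n : ℂ) * (2 * Real.pi * Complex.I)) = w := by
        rw [Complex.exp_add, Complex.exp_nat_mul_two_pi_mul_I, mul_one, hez₀]
      have := h (z₀ + (n : ℂ) * (2 * Real.pi * Complex.I))
      rwa [hexp] at this
  have := hQeval (z - z₀)
  rw [hQ0] at this
  simp at this
  exact this.symm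

/-- The identity and the exponential function are algebraically independent over `ℂ`:
if `P(z, exp z) = 0` for all `z`, then `P = 0`. -/
theorem stmt_9 (P : MvPolynomial (Fin 2) ℂ)
    (h : ∀ z : ℂ, MvPolynomial.eval ![z, Complex.exp z] P = 0) :
    P = 0 := by
  have key2 : ∀ z w : ℂ, MvPolynomial.eval ![z, w] P = 0 := by
    intro z w
    set R : Polynomial ℂ := MvPolynomial.aeval ![Polynomial.C z, Polynomial.X] P with hR
    have hReval : ∀ t : ℂ, R.eval t = MvPolynomial.eval ![z, t] P := by
      intro t
      rw [hR, eval_aeval_aux]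
      have : (fun i => Polynomial.eval t (![Polynomial.C z, Polynomial.X] i)) = ![z, t] := by
        funext i; fin_cases i <;> simp
      rw [this]
    have hR0 : R = 0 := by
      apply Polynomial.eq_zero_of_infinite_isRoot
      apply Set.Infinite.mono (s := {(0 : ℂ)}ᶜ)
      · intro t ht
        show R.IsRoot t
        unfold Polynomial.IsRoot
        rw [hReval]
        exact key P h z t ht
      · exact Set.Finite.infinite_compl (Set.finite_singleton 0)
    have := hReval w
    rw [hR0] at this
    simpa using this.symm
  apply MvPolynomial.funext
  intro x
  have hx : x = ![x 0, x 1] := by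
    funext i; fin_cases i <;> rfl
  rw [hx]
  simpa using key2 (x 0) (x 1)
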